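/- arXiv:1104.1947 — 5 statements merged into one kernel-verified Lean document; each statement's English description precedes it below -/
import Mathlib

section
/- Let x, y, z, z' be points in the Euclidean plane with |x - z| - |x - z'| = |y - z| - |y - z'| =: δ ≥ 0. Let u ∈ [x, z], u' ∈ [x, z'] with |x - u| = |x - u'|, and let v ∈ [y, z], v' ∈ [y, z'] with |y - v| = |y - v'|. Then |u' - v'| ≤ |u - v|. -/
/-!
Measured from the apex, `u, v` lie at distances `α, β` from `z` and `u', v'` at `α - δ, β - δ`
from `z'`, so both `|u - v|` and `|u' - v'|` are given by the law of cosines at the apex.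
The laws of cosines for the side `[x, y]` in the triangles `xzy` and `xz'y` eliminate the apex
angles: multiplied by `|x - z| |y - z|`, the decrease of the squared distance factors as
`2 δ (1 - cos ∠xz'y)` times a sum of products of nonnegative lengths.
-/

open EuclideanGeometry

theorem law_cos_of_mem_segment {E : Type*} [NormedAddCommGroup E] [InnerProductSpace ℝ E]
    {x y z u v : E} (hu : u ∈ segment ℝ z x) (hv : v ∈ segment ℝ z y) :
    dist u v * dist u v =
      dist u z * dist u z + dist v z * dist v z - 2 * dist u z * dist v z * Real.cos (∠ x z y) := by
  rw [segment_eq_image'] at hu hv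
  obtain ⟨t, ⟨ht, -⟩, rfl⟩ := hu
  obtain ⟨s, ⟨hs, -⟩, rfl⟩ := hv
  have hinner := InnerProductGeometry.cos_angle_mul_norm_mul_norm (x - z) (y - z)
  rw [show ∠ x z y = InnerProductGeometry.angle (x - z) (y - z) from rfl]
  simp only [dist_eq_norm, add_sub_cancel_left, add_sub_add_left_eq_sub, ← sq, norm_sub_sq_real,
    real_inner_smul_left, real_inner_smul_right, norm_smul, Real.norm_of_nonneg ht,
    Real.norm_of_nonneg hs, ← hinner]
  ring

theorem law_cos_zip_le {p q c α β δ κ κ' : ℝ} (hδ : 0 ≤ δ) (hαδ : δ ≤ α) (hαp : α ≤ p)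
    (hβδ : δ ≤ β) (hβq : β ≤ q) (hκ' : κ' ≤ 1)
    (hc : c * c = p * p + q * q - 2 * p * q * κ)
    (hc' : c * c = (p - δ) * (p - δ) + (q - δ) * (q - δ) - 2 * (p - δ) * (q - δ) * κ') :
    (α - δ) * (α - δ) + (β - δ) * (β - δ) - 2 * (α - δ) * (β - δ) * κ' ≤
      α * α + β * β - 2 * α * β * κ := by
  have key : p * q * (α * α + β * β - 2 * α * β * κ -
      ((α - δ) * (α - δ) + (β - δ) * (β - δ) - 2 * (α - δ) * (β - δ) * κ')) =
      2 * δ * (1 - κ') *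
        (δ * (p - α) * (q - β) + p * (α - δ) * (q - β) + q * (p - α) * (β - δ)) := by
    linear_combination (α * β) * hc' - (α * β) * hc
  have hp : 0 ≤ p := hδ.trans (hαδ.trans hαp)
  have hq : 0 ≤ q := hδ.trans (hβδ.trans hβq)
  rcases (mul_nonneg hp hq).eq_or_lt with hpq | hpq
  · rcases mul_eq_zero.mp hpq.symm with rfl | rfl
    · obtain rfl : δ = 0 := by linarith
      obtain rfl : α = 0 := by linarith
      simp
    · obtain rfl : δ = 0 := by linarith
      obtain rfl : β = 0 := by linarith
      simp
  · refine sub_nonneg.mp (nonneg_of_mul_nonneg_right (key ▸ ?_) hpq)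
    have := sub_nonneg.mpr hκ'
    have := sub_nonneg.mpr hαδ
    have := sub_nonneg.mpr hαp
    have := sub_nonneg.mpr hβδ
    have := sub_nonneg.mpr hβq
    positivity

/-- Zipper Lemma 5.7(b): zipping up both sides `[x,z]`, `[y,z]` by the same
amount `δ ≥ 0` (replacing the apex `z` by `z'`) does not increase the distance
between corresponding points `u ∈ [x,z]`, `v ∈ [y,z]`. -/
theorem rough_cat_stmt_7 (x y z z' u u' v v' : EuclideanSpace ℝ (Fin 2))
    (δ : ℝ) (hδ : 0 ≤ δ)
    (hx : dist x z - dist x z' = δ) (hy : dist y z - dist y z' = δ)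
    (hu : u ∈ segment ℝ x z) (hu' : u' ∈ segment ℝ x z')
    (huu : dist x u = dist x u')
    (hv : v ∈ segment ℝ y z) (hv' : v' ∈ segment ℝ y z')
    (hvv : dist y v = dist y v') :
    dist u' v' ≤ dist u v := by
  have hxuz := dist_add_dist_of_mem_segment hu
  have hxuz' := dist_add_dist_of_mem_segment hu'
  have hyvz := dist_add_dist_of_mem_segment hv
  have hyvz' := dist_add_dist_of_mem_segment hv'
  have hxz' : dist x z' = dist x z - δ := by linarith
  have hyz' : dist y z' = dist y z - δ := by linarith
  have hu'z' : dist u' z' = dist u z - δ := by linarith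
  have hv'z' : dist v' z' = dist v z - δ := by linarith
  rw [segment_symm] at hu hu' hv hv'
  rw [mul_self_le_mul_self_iff dist_nonneg dist_nonneg, law_cos_of_mem_segment hu hv,
    law_cos_of_mem_segment hu' hv', hu'z', hv'z']
  refine law_cos_zip_le hδ ?_ ?_ ?_ ?_ (Real.cos_le_one (∠ x z' y)) (law_cos x z y) ?_
  · linarith [dist_nonneg (x := u') (y := z')]
  · linarith [dist_nonneg (x := x) (y := u)]
  · linarith [dist_nonneg (x := v') (y := z')]
  · linarith [dist_nonneg (x := y) (y := v)]
  · rw [← hxz', ← hyz']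
    exact law_cos x z' y
end

section
/- Let x, y, z, z' be points in the Euclidean plane with δₓ := |x - z| - |x - z'| and δ_y := |y - z| - |y - z'|, and suppose |δₓ| ≤ δ_y. Let u ∈ [x, z] and u' ∈ [x, z'] with |x - u| = |x - u'|, and let v ∈ [x, y]. Then |u' - v| ≤ |u - v|. -/
/-!
Put `p = z - x`, `p' = z' - x`, `q = y - x`. Since `u - x` and `u' - x` have the same length,
`|u' - v| ≤ |u - v|` amounts to `⟪u - x, v - x⟫ ≤ ⟪u' - x, v - x⟫`, i.e. to the angle of `p', q` being
at most that of `p, q`. By the law of cosines this comparison of angles is a polynomial inequality in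
the side lengths of the triangles `xyz` and `xyz'`, which follows from `|δₓ| ≤ δ_y` together with the
triangle inequality in `xyz`.
-/

open RealInnerProductSpace

variable {E : Type*} [NormedAddCommGroup E] [InnerProductSpace ℝ E]

theorem norm_mul_inner_le_norm_mul_inner_of_abs_sub_norm_le {p p' q : E}
    (h : |‖p‖ - ‖p'‖| ≤ ‖p - q‖ - ‖p' - q‖) : ‖p'‖ * ⟪p, q⟫ ≤ ‖p‖ * ⟪p', q⟫ := by
  have hcos := norm_sub_sq_real p q
  have hcos' := norm_sub_sq_real p' q
  have hpq : ‖p - q‖ ≤ ‖p‖ + ‖q‖ := norm_sub_le p q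
  have hqp : ‖q‖ ≤ ‖p‖ + ‖p - q‖ := by simpa using norm_sub_le p (p - q)
  have hpq' : ‖p‖ ≤ ‖q‖ + ‖p - q‖ := by simpa using norm_add_le q (p - q)
  have hp := norm_nonneg p
  have hp' := norm_nonneg p'
  have hc' := norm_nonneg (p' - q)
  obtain ⟨h₁, h₂⟩ := abs_le.mp h
  -- `‖p' - q‖² ≤ (‖p - q‖ - |‖p‖ - ‖p'‖|)²` reduces the claim to `(a - a')(b² - (c - a)²) ≥ 0`
  -- resp. `(a' - a)((a + c)² - b²) ≥ 0` in the side lengths `a, b, c` of the triangle `0 p q`.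
  rcases le_total ‖p'‖ ‖p‖ with hle | hle
  · have hdiff : 0 ≤ (‖p‖ - ‖p'‖) * ((‖q‖ - ‖p - q‖ + ‖p‖) * (‖q‖ + ‖p - q‖ - ‖p‖)) :=
      mul_nonneg (by linarith) (mul_nonneg (by linarith) (by linarith))
    have hsq : 0 ≤ ‖p‖ * ((‖p - q‖ - ‖p' - q‖ - (‖p‖ - ‖p'‖)) *
        (‖p - q‖ + ‖p' - q‖ - (‖p‖ - ‖p'‖))) :=
      mul_nonneg hp (mul_nonneg (by linarith) (by linarith))
    nlinarith
  · have hdiff : 0 ≤ (‖p'‖ - ‖p‖) * ((‖p‖ + ‖p - q‖ - ‖q‖) * (‖p‖ + ‖p - q‖ + ‖q‖)) :=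
      mul_nonneg (by linarith) (mul_nonneg (by linarith) (by positivity))
    have hsq : 0 ≤ ‖p‖ * ((‖p - q‖ - ‖p' - q‖ - (‖p'‖ - ‖p‖)) *
        (‖p - q‖ + ‖p' - q‖ - (‖p'‖ - ‖p‖))) :=
      mul_nonneg hp (mul_nonneg (by linarith) (by linarith))
    nlinarith

theorem inner_smul_le_inner_smul_of_norm_eq {p p' q : E}
    (h : ‖p'‖ * ⟪p, q⟫ ≤ ‖p‖ * ⟪p', q⟫) {t t' : ℝ} (ht : 0 ≤ t) (ht' : 0 ≤ t')
    (hnorm : ‖t • p‖ = ‖t' • p'‖) : ⟪t • p, q⟫ ≤ ⟪t' • p', q⟫ := by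
  rcases eq_or_ne p' 0 with rfl | hp'
  · rw [smul_zero, norm_zero, norm_eq_zero] at hnorm
    simp [hnorm]
  refine le_of_mul_le_mul_left ?_ (norm_pos_iff.mpr hp')
  calc ‖p'‖ * ⟪t • p, q⟫ = t * (‖p'‖ * ⟪p, q⟫) := by rw [real_inner_smul_left]; ring
    _ ≤ t * (‖p‖ * ⟪p', q⟫) := mul_le_mul_of_nonneg_left h ht
    _ = ‖t • p‖ * ⟪p', q⟫ := by rw [norm_smul, Real.norm_of_nonneg ht]; ring
    _ = ‖p'‖ * ⟪t' • p', q⟫ := by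
      rw [hnorm, norm_smul, Real.norm_of_nonneg ht', real_inner_smul_left]; ring

theorem norm_sub_le_norm_sub_of_inner_le {a a' w : E} (hnorm : ‖a‖ = ‖a'‖)
    (h : ⟪a, w⟫ ≤ ⟪a', w⟫) : ‖a' - w‖ ≤ ‖a - w‖ := by
  refine (sq_le_sq₀ (norm_nonneg _) (norm_nonneg _)).mp ?_
  rw [norm_sub_sq_real, norm_sub_sq_real, hnorm]
  linarith

/-- Zipper Lemma 5.7(a): if `|δₓ| ≤ δ_y`, where `δₓ = |x-z| - |x-z'|` and
`δ_y = |y-z| - |y-z'|`, then moving the apex from `z` to `z'` does not increase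
the distance from `u ∈ [x,z]` (kept at the same distance from `x`) to any point
`v` of `[x,y]`. -/
theorem rough_cat_stmt_8 (x y z z' u u' v : EuclideanSpace ℝ (Fin 2))
    (hδ : |dist x z - dist x z'| ≤ dist y z - dist y z')
    (hu : u ∈ segment ℝ x z) (hu' : u' ∈ segment ℝ x z')
    (huu : dist x u = dist x u')
    (hv : v ∈ segment ℝ x y) :
    dist u' v ≤ dist u v := by
  rw [segment_eq_image'] at hu hu' hv
  obtain ⟨t, ⟨ht, -⟩, rfl⟩ := hu
  obtain ⟨t', ⟨ht', -⟩, rfl⟩ := hu'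
  obtain ⟨μ, ⟨hμ, -⟩, rfl⟩ := hv
  rw [dist_self_add_right, dist_self_add_right] at huu
  have hangle : ‖z' - x‖ * ⟪z - x, y - x⟫ ≤ ‖z - x‖ * ⟪z' - x, y - x⟫ := by
    apply norm_mul_inner_le_norm_mul_inner_of_abs_sub_norm_le
    simpa only [sub_sub_sub_cancel_right, ← dist_eq_norm, dist_comm] using hδ
  rw [dist_add_left, dist_add_left, dist_eq_norm, dist_eq_norm]
  refine norm_sub_le_norm_sub_of_inner_le huu ?_
  rw [real_inner_smul_right, real_inner_smul_right]
  exact mul_le_mul_of_nonneg_left (inner_smul_le_inner_smul_of_norm_eq hangle ht ht' huu) hμ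
end

section
/- Let a, b, c be the sidelengths of a nondegenerate Euclidean triangle T(x, y, z) with a = |x - z|, b = |y - z|, c = |x - y|, and let θ(t) be the angle at x in the triangle with sidelengths |x - z| = a + t, |y - z| = b - t, |x - y| = c, for t in an interval where the triangle inequality holds strictly. Then θ is strictly decreasing: increasing |x - z| by t while decreasing |y - z| by t strictly decreases the angle at x. -/
open Set

/-- The angle at `x`, via the Cosine Rule, of a triangle with sidelengths
`|x-z| = a + t`, `|y-z| = b - t`, `|x-y| = c`. -/
noncomputable def zipAngle (a b c t : ℝ) : ℝ :=
  Real.arccos (((a + t)^2 + c^2 - (b - t)^2) / (2 * (a + t) * c))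

/-!
The sum `L = (a + t) + (b - t) = a + b` does not depend on `t`, and with
`p + q = L` fixed the Cosine Rule gives `cos θ = L / c - (L² - c²) / (2 p c)` for the angle
between the sides `p` and `c`. Since `c < L`, this increases strictly with `p = a + t`,
and `arccos` is strictly decreasing on `[-1, 1]`.
-/

noncomputable def cosineRuleRatio (p q c : ℝ) : ℝ := (p ^ 2 + c ^ 2 - q ^ 2) / (2 * p * c)

lemma cosineRuleRatio_mem_Icc {p q c : ℝ} (hp : 0 < p) (hc : 0 < c)
    (hdiff : |p - q| ≤ c) (hsum : c ≤ p + q) : cosineRuleRatio p q c ∈ Icc (-1) 1 := by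
  have hd : 0 < 2 * p * c := by positivity
  obtain ⟨h₁, h₂⟩ := abs_le.mp hdiff
  constructor
  · rw [cosineRuleRatio, le_div_iff₀ hd]; nlinarith
  · rw [cosineRuleRatio, div_le_iff₀ hd]; nlinarith

lemma cosineRuleRatio_sub_eq {p c : ℝ} (L : ℝ) (hp : p ≠ 0) (hc : c ≠ 0) :
    cosineRuleRatio p (L - p) c = L / c - (L ^ 2 - c ^ 2) / (2 * p * c) := by
  rw [cosineRuleRatio]; field_simp; ring

lemma cosineRuleRatio_sub_strictMonoOn {c L : ℝ} (hc : 0 < c) (hcL : c < L) :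
    StrictMonoOn (fun p ↦ cosineRuleRatio p (L - p) c) (Ioi 0) := by
  intro p (hp : 0 < p) p' (hp' : 0 < p') hpp'
  simp only [cosineRuleRatio_sub_eq L hp.ne' hc.ne', cosineRuleRatio_sub_eq L hp'.ne' hc.ne']
  have hL : 0 < L ^ 2 - c ^ 2 := by nlinarith
  gcongr

theorem rough_cat_stmt_9_general (a b c : ℝ) (I : Set ℝ)
    (hnd : ∀ t ∈ I, 0 < a + t ∧ 0 < b - t ∧ 0 < c ∧
      |(a + t) - (b - t)| < c ∧ c < (a + t) + (b - t)) :
    StrictAntiOn (zipAngle a b c) I := by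
  have hmem : ∀ t ∈ I, cosineRuleRatio (a + t) (b - t) c ∈ Icc (-1) 1 := by
    intro t ht
    obtain ⟨ha, -, hc, hdiff, hsum⟩ := hnd t ht
    exact cosineRuleRatio_mem_Icc ha hc hdiff.le hsum.le
  intro x hx y hy hxy
  obtain ⟨hax, -, hc, -, hsum⟩ := hnd x hx
  have hay := (hnd y hy).1
  have hlt : cosineRuleRatio (a + x) (b - x) c < cosineRuleRatio (a + y) (b - y) c := by
    rw [show b - x = (a + b) - (a + x) by ring, show b - y = (a + b) - (a + y) by ring]
    exact cosineRuleRatio_sub_strictMonoOn hc (by linarith) hax hay (by linarith)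
  exact Real.strictAntiOn_arccos (hmem x hx) (hmem y hy) hlt

/-- In the proof of Lemma 5.7(a): increasing `|x-z|` by `t` while decreasing
`|y-z|` by `t` strictly decreases the angle at `x`, on any interval where the
triangle inequality holds strictly. -/
theorem rough_cat_stmt_9 (a b c : ℝ) (I : Set ℝ) (hI : I.OrdConnected)
    (hnd : ∀ t ∈ I, 0 < a + t ∧ 0 < b - t ∧ 0 < c ∧
      |(a + t) - (b - t)| < c ∧ c < (a + t) + (b - t)) :
    StrictAntiOn (zipAngle a b c) I :=
  rough_cat_stmt_9_general a b c I hnd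
end

section
/- Every 4-tuple of points x, y, z, w in the hyperbolic plane ℍ² satisfies d(x,z) + d(y,w) ≤ max(d(x,y) + d(z,w), d(x,w) + d(y,z)) + 2·log 3. -/
/-!
In the upper half-plane `exp (d(z, w) / 2) = (|z - w| + |z - w̄|) / (2 √(Im z Im w))`, so after
exponentiating half the inequality the square-root factors cancel and it becomes a Ptolemy-type
inequality for the Euclidean quantities `|z - w| + |z - w̄|`. Four instances of the Euclidean Ptolemy
inequality together with `|z - w| ≤ |z - w̄|` give it with the constant `3 / 2`, and
`3 / 2 · (a + b) ≤ 3 · max a b` turns it into the four-point condition with `δ = log 3`.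
-/

open Real
open scoped ComplexConjugate

namespace Complex

/-- Adding up Ptolemy's inequality for the quadruples `(x, y, z, w)`, `(x, y, z, w̄)`,
`(x, y, z̄, w)` and `(x, ȳ, z̄, w)`, the two hypotheses absorb the surplus terms. -/
theorem mul_dist_add_dist_conj_le (x y z w : ℂ)
    (hxy : dist x y ≤ dist x (conj y)) (hxw : dist x w ≤ dist x (conj w)) :
    (dist x z + dist x (conj z)) * (dist y w + dist y (conj w)) ≤
      3 / 2 * ((dist x y + dist x (conj y)) * (dist z w + dist z (conj w)) +
        (dist x w + dist x (conj w)) * (dist y z + dist y (conj z))) := by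
  have P₁ := EuclideanGeometry.mul_dist_le_mul_dist_add_mul_dist x y z w
  have P₂ := EuclideanGeometry.mul_dist_le_mul_dist_add_mul_dist x y z (conj w)
  have P₃ := EuclideanGeometry.mul_dist_le_mul_dist_add_mul_dist x y (conj z) w
  have P₄ := EuclideanGeometry.mul_dist_le_mul_dist_add_mul_dist x (conj y) (conj z) w
  rw [dist_conj_comm z w] at P₃ P₄
  rw [dist_conj_conj, dist_conj_comm y w] at P₄
  linarith [mul_le_mul_of_nonneg_right hxy (dist_nonneg : 0 ≤ dist z (conj w)),
    mul_le_mul_of_nonneg_right hxw (dist_nonneg : 0 ≤ dist y z),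
    mul_nonneg (dist_nonneg : 0 ≤ dist x (conj y)) (dist_nonneg : 0 ≤ dist z w),
    mul_nonneg (dist_nonneg : 0 ≤ dist x w) (dist_nonneg : 0 ≤ dist y (conj z)),
    mul_nonneg (dist_nonneg : 0 ≤ dist x (conj w)) (dist_nonneg : 0 ≤ dist y (conj z)),
    mul_nonneg (dist_nonneg : 0 ≤ dist x y) (dist_nonneg : 0 ≤ dist z w)]

end Complex

namespace UpperHalfPlane

theorem dist_coe_le_dist_coe_conj (z w : ℍ) : dist (z : ℂ) w ≤ dist (z : ℂ) (conj (w : ℂ)) := by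
  have h := (sinh_lt_cosh (dist z w / 2)).le
  rwa [sinh_half_dist, cosh_half_dist, div_le_div_iff_of_pos_right (by positivity)] at h

theorem exp_half_dist_add_mul (a b c d : ℍ) :
    exp ((dist a b + dist c d) / 2) * (4 * √(a.im * b.im * c.im * d.im)) =
      (dist (a : ℂ) b + dist (a : ℂ) (conj (b : ℂ))) *
        (dist (c : ℂ) d + dist (c : ℂ) (conj (d : ℂ))) := by
  rw [add_div, exp_add, exp_half_dist, exp_half_dist, mul_assoc (a.im * b.im),
    sqrt_mul (mul_pos a.im_pos b.im_pos).le]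
  field_simp
  ring

theorem exp_half_dist_ptolemy (x y z w : ℍ) :
    exp ((dist x z + dist y w) / 2) ≤
      3 / 2 * (exp ((dist x y + dist z w) / 2) + exp ((dist x w + dist y z) / 2)) := by
  have hxzyw := exp_half_dist_add_mul x z y w
  have hxyzw := exp_half_dist_add_mul x y z w
  have hxwyz := exp_half_dist_add_mul x w y z
  rw [show x.im * z.im * y.im * w.im = x.im * y.im * z.im * w.im by ring] at hxzyw
  rw [show x.im * w.im * y.im * z.im = x.im * y.im * z.im * w.im by ring] at hxwyz
  refine le_of_mul_le_mul_right ?_ (by positivity : 0 < 4 * √(x.im * y.im * z.im * w.im))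
  calc _ = _ := hxzyw
    _ ≤ _ := Complex.mul_dist_add_dist_conj_le x y z w
      (dist_coe_le_dist_coe_conj x y) (dist_coe_le_dist_coe_conj x w)
    _ = _ := by rw [← hxyzw, ← hxwyz]; ring

end UpperHalfPlane

/-- The four-point `δ`-hyperbolicity inequality for the hyperbolic plane with
`δ = log 3`: for all `x, y, z, w` in `ℍ²`,
`d(x,z) + d(y,w) ≤ max(d(x,y) + d(z,w), d(x,w) + d(y,z)) + 2 log 3`. -/
theorem rough_cat_stmt_13 (x y z w : UpperHalfPlane) :
    dist x z + dist y w ≤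
      max (dist x y + dist z w) (dist x w + dist y z) + 2 * Real.log 3 := by
  set M := max (dist x y + dist z w) (dist x w + dist y z)
  have h : exp ((dist x z + dist y w) / 2) ≤ exp (log 3 + M / 2) := by
    have hxyzw : exp ((dist x y + dist z w) / 2) ≤ exp (M / 2) := by
      gcongr; exact le_max_left _ _
    have hxwyz : exp ((dist x w + dist y z) / 2) ≤ exp (M / 2) := by
      gcongr; exact le_max_right _ _
    rw [exp_add, exp_log three_pos]
    linarith [UpperHalfPlane.exp_half_dist_ptolemy x y z w]
  linarith [exp_le_exp.1 h]
end

section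
/- Let X be a metric space satisfying the (C', κ)-rough 4-point condition for some C' ≥ 0 and κ < 0, i.e., every 4-tuple has a C'-rough subembedding into the model space M²_κ. Then X is δ-hyperbolic with δ = (log 3)/√(−κ) + C': for all x, y, z, w ∈ X, d(x,z) + d(y,w) ≤ max(d(x,y) + d(z,w), d(x,w) + d(y,z)) + 2δ. -/
/-!
Since `sinh (d(z, w) / 2) = |z - w| / (2 √(Im z · Im w))` in the upper half-plane, Ptolemy's
inequality in `ℂ` becomes a Ptolemy inequality for `sinh` of half-distances. Writing the products
of `sinh` as differences of `cosh` and using the triangle inequality, it yields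
`cosh ((d₁₃ + d₂₄) / 2) ≤ 3 cosh (m / 2) - 2` with `m` the larger of the other two pair sums, hence
`d₁₃ + d₂₄ ≤ m + 2 log 3`. Rescaling gives the four-point condition in `M²_κ`, and a rough
subembedding transfers it to `X` at the cost of `C'`.
-/

open Real UpperHalfPlane

/-- The metric of the model space `M²_κ` for `κ < 0`: the hyperbolic plane with
its metric multiplied by `1/√(-κ)`. -/
noncomputable def modelDist (κ : ℝ) (a b : UpperHalfPlane) : ℝ :=
  dist a b / Real.sqrt (-κ)

/-- `(x̄₁, x̄₂, x̄₃, x̄₄)` is a `C'`-rough subembedding of `(x₁, x₂, x₃, x₄)`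
(with `x₀ = x₄`) in `M²_κ`. -/
def IsRoughSubembedding {X : Type*} [MetricSpace X] (κ C' : ℝ)
    (x₁ x₂ x₃ x₄ : X) (a₁ a₂ a₃ a₄ : UpperHalfPlane) : Prop :=
  dist x₁ x₄ = modelDist κ a₁ a₄ ∧ dist x₂ x₁ = modelDist κ a₂ a₁ ∧
  dist x₃ x₂ = modelDist κ a₃ a₂ ∧ dist x₄ x₃ = modelDist κ a₄ a₃ ∧
  dist x₁ x₃ ≤ modelDist κ a₁ a₃ ∧ dist x₂ x₄ ≤ modelDist κ a₂ a₄ + C'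

namespace Real

theorem two_mul_sinh_mul_sinh (x y : ℝ) :
    2 * (sinh x * sinh y) = cosh (x + y) - cosh (x - y) := by
  rw [cosh_add, cosh_sub]
  ring

theorem le_add_log_three_of_cosh_le {t s : ℝ} (hs : 0 ≤ s) (h : cosh t ≤ 3 * cosh s - 2) :
    t ≤ s + log 3 := by
  have hexp_t : exp t ≤ 2 * cosh t := by
    rw [cosh_eq]
    linarith [exp_pos (-t)]
  have hexp_s : 2 * cosh s ≤ exp s + 1 := by
    rw [cosh_eq]
    linarith [exp_le_one_iff.2 (neg_nonpos.2 hs)]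
  refine exp_le_exp.1 ?_
  rw [exp_add, exp_log three_pos]
  linarith

end Real

theorem dist_add_dist_le_max_add_two_log_three_of_sinh_ptolemy {P : Type*} [PseudoMetricSpace P]
    {a b c d : P}
    (h : sinh (dist a c / 2) * sinh (dist b d / 2) ≤
      sinh (dist a b / 2) * sinh (dist c d / 2) + sinh (dist b c / 2) * sinh (dist a d / 2)) :
    dist a c + dist b d ≤ max (dist a b + dist c d) (dist a d + dist b c) + 2 * log 3 := by
  set m := max (dist a b + dist c d) (dist a d + dist b c)
  have hm₁ : dist a b + dist c d ≤ m := le_max_left _ _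
  have hm₂ : dist a d + dist b c ≤ m := le_max_right _ _
  have hac : dist a c ≤ m := by
    linarith [dist_triangle a b c, dist_triangle a d c, dist_comm d c]
  have hbd : dist b d ≤ m := by
    linarith [dist_triangle b a d, dist_triangle b c d, dist_comm a b]
  have nonneg := fun u v : P ↦ (dist_nonneg : 0 ≤ dist u v)
  have hcosh (t : ℝ) (ht : |t| ≤ m / 2) : cosh t ≤ cosh (m / 2) :=
    cosh_le_cosh.2 (ht.trans (le_abs_self _))
  have hdiff := hcosh (dist a c / 2 - dist b d / 2)
    (abs_le.2 ⟨by linarith [nonneg a c], by linarith [nonneg b d]⟩)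
  have habcd := hcosh (dist a b / 2 + dist c d / 2)
    (abs_le.2 ⟨by linarith [nonneg a b, nonneg c d], by linarith⟩)
  have hbcad := hcosh (dist b c / 2 + dist a d / 2)
    (abs_le.2 ⟨by linarith [nonneg b c, nonneg a d], by linarith⟩)
  have h2 := mul_le_mul_of_nonneg_left h zero_le_two
  rw [mul_add, two_mul_sinh_mul_sinh, two_mul_sinh_mul_sinh, two_mul_sinh_mul_sinh] at h2
  have hsum : cosh (dist a c / 2 + dist b d / 2) ≤ 3 * cosh (m / 2) - 2 := by
    linarith [one_le_cosh (dist a b / 2 - dist c d / 2), one_le_cosh (dist b c / 2 - dist a d / 2)]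
  have := le_add_log_three_of_cosh_le (by linarith [nonneg a b, nonneg c d]) hsum
  linarith

namespace UpperHalfPlane

/-- Ptolemy's inequality in `ℂ`: by `sinh_half_dist`, each product below is the product of the
two Euclidean distances over the same factor `4 √(Im a Im b Im c Im d)`. -/
theorem sinh_half_dist_mul_sinh_half_dist_le (a b c d : ℍ) :
    sinh (dist a c / 2) * sinh (dist b d / 2) ≤
      sinh (dist a b / 2) * sinh (dist c d / 2) + sinh (dist b c / 2) * sinh (dist a d / 2) := by
  have ha := a.im_pos
  have hb := b.im_pos
  have hc := c.im_pos
  have hd := d.im_pos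
  have hprod (x y z w : ℍ) (hxyzw : x.im * y.im * z.im * w.im = a.im * b.im * c.im * d.im) :
      sinh (dist x z / 2) * sinh (dist y w / 2) =
        dist (x : ℂ) z * dist (y : ℂ) w / (4 * √(a.im * b.im * c.im * d.im)) := by
    rw [sinh_half_dist, sinh_half_dist, div_mul_div_comm, mul_mul_mul_comm,
      ← sqrt_mul (by positivity), ← hxyzw]
    ring_nf
  rw [hprod a b c d rfl, hprod a c b d (by ring), hprod b a c d (by ring), ← add_div]
  gcongr
  exact EuclideanGeometry.mul_dist_le_mul_dist_add_mul_dist (a : ℂ) b c d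

theorem dist_add_dist_le_max_add_two_log_three (a b c d : ℍ) :
    dist a c + dist b d ≤ max (dist a b + dist c d) (dist a d + dist b c) + 2 * log 3 :=
  dist_add_dist_le_max_add_two_log_three_of_sinh_ptolemy
    (sinh_half_dist_mul_sinh_half_dist_le a b c d)

end UpperHalfPlane

theorem modelDist_comm (κ : ℝ) (a b : ℍ) : modelDist κ a b = modelDist κ b a := by
  rw [modelDist, modelDist, dist_comm]

theorem modelDist_add_modelDist_le (κ : ℝ) (a b c d : ℍ) :
    modelDist κ a c + modelDist κ b d ≤
      max (modelDist κ a b + modelDist κ c d) (modelDist κ a d + modelDist κ b c) +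
        2 * (log 3 / √(-κ)) := by
  simp only [modelDist, ← add_div, max_div_div_right (sqrt_nonneg _), mul_div_assoc']
  exact div_le_div_of_nonneg_right (dist_add_dist_le_max_add_two_log_three a b c d)
    (sqrt_nonneg _)

theorem rough_cat_stmt_14_general (X : Type*) [MetricSpace X] (κ C' : ℝ)
    (hC' : 0 ≤ C')
    (hsub : ∀ x₁ x₂ x₃ x₄ : X, ∃ a₁ a₂ a₃ a₄ : UpperHalfPlane,
      IsRoughSubembedding κ C' x₁ x₂ x₃ x₄ a₁ a₂ a₃ a₄) :
    ∀ x y z w : X,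
      dist x z + dist y w ≤
        max (dist x y + dist z w) (dist x w + dist y z) +
          2 * (Real.log 3 / Real.sqrt (-κ) + C') := by
  intro x y z w
  obtain ⟨a₁, a₂, a₃, a₄, hxw, hyx, hzy, hwz, hxz, hyw⟩ := hsub x y z w
  have hmodel := modelDist_add_modelDist_le κ a₁ a₂ a₃ a₄
  rw [modelDist_comm κ a₁ a₂, modelDist_comm κ a₃ a₄, modelDist_comm κ a₂ a₃, ← hxw,
    ← hyx, ← hzy, ← hwz, dist_comm y x, dist_comm w z, dist_comm z y] at hmodel
  linarith

/-- If every 4-tuple of a metric space `X` has a `C'`-rough subembedding into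
`M²_κ` (`κ < 0`), then `X` is `δ`-hyperbolic with `δ = (log 3)/√(-κ) + C'`,
in the four-point sense. -/
theorem rough_cat_stmt_14 (X : Type*) [MetricSpace X] (κ C' : ℝ)
    (hκ : κ < 0) (hC' : 0 ≤ C')
    (hsub : ∀ x₁ x₂ x₃ x₄ : X, ∃ a₁ a₂ a₃ a₄ : UpperHalfPlane,
      IsRoughSubembedding κ C' x₁ x₂ x₃ x₄ a₁ a₂ a₃ a₄) :
    ∀ x y z w : X,
      dist x z + dist y w ≤
        max (dist x y + dist z w) (dist x w + dist y z) +
          2 * (Real.log 3 / Real.sqrt (-κ) + C') :=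
  rough_cat_stmt_14_general X κ C' hC' hsub
end
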